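/- arXiv:2111.02483 — 2 statements merged into one kernel-verified Lean document; each statement's English description precedes it below -/
import Mathlib

section
/- Let G be a connected graph with maximum degree at most 4, not isomorphic to the octahedron. Then for every necktie Q of G there exists an inner triangle T of G such that Q = Q_T = {q : q clique of G, |q ∩ T| ≥ 2}. -/
universe u

variable {V : Type u}

/-- A clique of `G` in the sense of the paper: a maximal complete subgraph,
represented as a finset of vertices. -/
def MaxClique (G : SimpleGraph V) (s : Finset V) : Prop :=
  G.IsClique (s : Set V) ∧ ∀ t : Finset V, G.IsClique (t : Set V) → s ⊆ t → s = t

/-- A pairwise-intersecting family of finsets. -/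
def PairwiseIntersecting (Q : Set (Finset V)) : Prop :=
  ∀ q ∈ Q, ∀ r ∈ Q, ∃ v, v ∈ q ∧ v ∈ r

/-- A clique of the clique graph `K(G)`: a maximal pairwise-intersecting family of
cliques of `G`. -/
def IsCliqueOfCliques (G : SimpleGraph V) (Q : Set (Finset V)) : Prop :=
  (∀ q ∈ Q, MaxClique G q) ∧ PairwiseIntersecting Q ∧
    ∀ Q' : Set (Finset V), Q ⊆ Q' → (∀ q ∈ Q', MaxClique G q) →
      PairwiseIntersecting Q' → Q' = Q

/-- A necktie: a clique of `K(G)` with empty total intersection. -/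
def IsNecktie (G : SimpleGraph V) (Q : Set (Finset V)) : Prop :=
  IsCliqueOfCliques G Q ∧ ¬ ∃ v, ∀ q ∈ Q, v ∈ q

/-- The star of a vertex: the family of cliques of `G` containing it. -/
def starOf (G : SimpleGraph V) (x : V) : Set (Finset V) :=
  {q | MaxClique G q ∧ x ∈ q}

/-- A vertex is normal when its star is a clique of `K(G)`. -/
def IsNormal (G : SimpleGraph V) (x : V) : Prop :=
  IsCliqueOfCliques G (starOf G x)

/-- A triangle: a complete subgraph with three vertices. -/
def IsTriangle (G : SimpleGraph V) (T : Finset V) : Prop :=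
  G.IsClique (T : Set V) ∧ T.card = 3

/-- An inner triangle: a triangle that is a clique and such that each of its edges
lies in a triangle different from `T`. -/
def IsInnerTriangle [DecidableEq V] (G : SimpleGraph V) (T : Finset V) : Prop :=
  MaxClique G T ∧ T.card = 3 ∧
    ∀ x ∈ T, ∀ y ∈ T, x ≠ y →
      ∃ T' : Finset V, IsTriangle G T' ∧ T' ≠ T ∧ T ∩ T' = ({x, y} : Finset V)

/-- `Q_T`: the family of cliques meeting the triangle `T` in at least two vertices. -/
def QT [DecidableEq V] (G : SimpleGraph V) (T : Finset V) : Set (Finset V) :=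
  {q | MaxClique G q ∧ 2 ≤ (q ∩ T).card}

/-- Adjacency between two vertices of `K²(G)` (i.e. cliques of `K(G)`):
they are distinct and intersect. -/
def Adj2 (A B : Set (Finset V)) : Prop :=
  A ≠ B ∧ ∃ q, q ∈ A ∧ q ∈ B

/-- `s` induces a 4-cycle in `G`. -/
def InducesC4 [DecidableEq V] (G : SimpleGraph V) (s : Finset V) : Prop :=
  ∃ a b c d : V, a ≠ b ∧ a ≠ c ∧ a ≠ d ∧ b ≠ c ∧ b ≠ d ∧ c ≠ d ∧
    s = ({a, b, c, d} : Finset V) ∧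
    G.Adj a b ∧ G.Adj b c ∧ G.Adj c d ∧ G.Adj d a ∧ ¬ G.Adj a c ∧ ¬ G.Adj b d

/-- The octahedron, i.e. the complete tripartite graph `K_{2,2,2}`. -/
def octahedron : SimpleGraph (Fin 3 × Fin 2) where
  Adj a b := a.1 ≠ b.1
  symm := ⟨fun _ _ h => h.symm⟩
  loopless := ⟨fun _ h => h rfl⟩

/-- The clique graph `K(G)`: the intersection graph of the cliques of `G`. -/
def cliqueGraph (G : SimpleGraph V) : SimpleGraph {q : Finset V // MaxClique G q} where
  Adj q r := q ≠ r ∧ ∃ v, v ∈ q.1 ∧ v ∈ r.1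
  symm := ⟨fun _ _ h => ⟨h.1.symm, h.2.imp fun _ hv => ⟨hv.2, hv.1⟩⟩⟩
  loopless := ⟨fun _ h => h.1 rfl⟩

/-- A graph is clique-Helly when its family of cliques has the Helly property. -/
def CliqueHelly {W : Type*} (H : SimpleGraph W) : Prop :=
  ∀ F : Set (Finset W), F.Nonempty → (∀ q ∈ F, MaxClique H q) →
    PairwiseIntersecting F → ∃ v, ∀ q ∈ F, v ∈ q

/-- Hereditary clique-Helly: every induced subgraph is clique-Helly. -/
def HereditaryCliqueHelly {W : Type*} (H : SimpleGraph W) : Prop :=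
  ∀ s : Set W, CliqueHelly (SimpleGraph.induce s H)

/-- A finite graph packaged with its vertex type, to allow iterating `K`. -/
structure FGraph where
  V : Type u
  fin : Fintype V
  G : SimpleGraph V

/-- The clique graph operator on packaged finite graphs. -/
noncomputable def FGraph.K (F : FGraph) : FGraph where
  V := {q : Finset F.V // MaxClique F.G q}
  fin := by
    haveI := F.fin
    classical
    exact Subtype.fintype _
  G := cliqueGraph F.G

/-- Iterated clique graphs: `iterK F n` packages `Kⁿ(G)`. -/
noncomputable def iterK (F : FGraph) : ℕ → FGraph
  | 0 => F
  | n + 1 => (iterK F n).K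

/-!
A necktie `Q` has no common vertex, so a minimal subfamily of `Q` without a common vertex
consists of cliques `q i` with private vertices `a i`, lying in `q j` exactly when `j ≠ i`.
The private vertices are pairwise adjacent, and a degree count leaves room for exactly three
of them, spanning a triangle `T`. Any other clique `p` of `Q` meets `q 0`, `q 1`, `q 2`; if it
met `T` in at most one vertex, some vertex would be adjacent to all of `T` and to two more
vertices, unless `T` and the three meeting points span an octahedron, which by connectivity
and the degree bound is all of `G`. Hence `Q ⊆ Q_T`, and `Q = Q_T` by maximality. Counting
degrees once more, no vertex is adjacent to all of `T`, so `T` is a clique, and each edge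
`xy` of `T` spans a second triangle inside a clique of `Q` that misses the third vertex.
-/

open Finset

section MaxClique

variable {G : SimpleGraph V} {q : Finset V} {u v : V}

theorem MaxClique.adj (hq : MaxClique G q) (hu : u ∈ q) (hv : v ∈ q) (huv : u ≠ v) :
    G.Adj u v :=
  hq.1 hu hv huv

theorem MaxClique.mem_of_forall_adj [DecidableEq V] (hq : MaxClique G q)
    (h : ∀ u ∈ q, u ≠ v → G.Adj v u) : v ∈ q := by
  have hclique : G.IsClique (insert v q : Finset V) := by
    rw [coe_insert, SimpleGraph.isClique_insert]
    exact ⟨hq.1, fun u hu hvu => h u hu hvu.symm⟩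
  rw [hq.2 _ hclique (subset_insert v q)]
  exact mem_insert_self v q

theorem MaxClique.exists_not_adj [DecidableEq V] (hq : MaxClique G q) (hv : v ∉ q) :
    ∃ u ∈ q, ¬ G.Adj v u := by
  by_contra! h
  exact hv (hq.mem_of_forall_adj fun u hu _ => h u hu)

theorem maxClique_of_forall_exists_not_adj {T : Finset V} (hT : G.IsClique (T : Set V))
    (h : ∀ d ∉ T, ∃ t ∈ T, ¬ G.Adj d t) : MaxClique G T := by
  refine ⟨hT, fun t ht hTt => ?_⟩
  by_contra hne
  obtain ⟨d, hdt, hdT⟩ := exists_of_ssubset (hTt.ssubset_of_ne hne)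
  obtain ⟨s, hsT, hds⟩ := h d hdT
  exact hds (ht hdt (hTt hsT) (ne_of_mem_of_not_mem hsT hdT).symm)

end MaxClique

section Degree

variable {G : SimpleGraph V} [Fintype V] [DecidableRel G.Adj] {s : Finset V} {v : V}

theorem card_le_degree_of_forall_adj (hs : ∀ u ∈ s, G.Adj v u) : s.card ≤ G.degree v :=
  card_le_card fun u hu => (G.mem_neighborFinset v u).2 (hs u hu)

theorem mem_of_adj_of_degree_le_card (hs : ∀ u ∈ s, G.Adj v u) (hdeg : G.degree v ≤ s.card)
    {u : V} (hu : G.Adj v u) : u ∈ s := by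
  have hnbr : s = G.neighborFinset v :=
    eq_of_subset_of_card_le (fun u hu => (G.mem_neighborFinset v u).2 (hs u hu)) hdeg
  exact hnbr ▸ (G.mem_neighborFinset v u).2 hu

theorem eq_of_adj_of_forall_adj [DecidableEq V] (hdeg : G.degree v ≤ 4) {T : Finset V}
    (hT : T.card = 3) (hvT : ∀ t ∈ T, G.Adj v t) {u w : V} (hu : G.Adj v u) (hw : G.Adj v w)
    (huT : u ∉ T) (hwT : w ∉ T) : u = w := by
  by_contra huw
  have hcard : (insert u (insert w T)).card = 5 := by
    rw [card_insert_of_notMem (by simp [huw, huT]), card_insert_of_notMem hwT, hT]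
  have hle : (insert u (insert w T)).card ≤ G.degree v :=
    card_le_degree_of_forall_adj (by simp only [forall_mem_insert]; exact ⟨hu, hw, hvT⟩)
  omega

end Degree

theorem mem_of_two_le_card_inter [DecidableEq V] {q T : Finset V} {x z : V}
    (hT : T.card = 3) (hq : 2 ≤ (q ∩ T).card) (hz : z ∈ T) (hzq : z ∉ q) (hx : x ∈ T)
    (hxz : x ≠ z) : x ∈ q := by
  have hsub : q ∩ T ⊆ T.erase z := fun y hy =>
    mem_erase.2 ⟨fun h => hzq (h ▸ (mem_inter.1 hy).1), (mem_inter.1 hy).2⟩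
  have heq : q ∩ T = T.erase z :=
    eq_of_subset_of_card_le hsub (by rw [card_erase_of_mem hz, hT]; omega)
  exact (mem_inter.1 (heq ▸ mem_erase.2 ⟨hxz, hx⟩)).1

theorem pairwiseIntersecting_QT [DecidableEq V] (G : SimpleGraph V) {T : Finset V}
    (hT : T.card = 3) : PairwiseIntersecting (QT G T) := by
  intro q hq r hr
  obtain ⟨v, hv⟩ := inter_nonempty_of_card_lt_card_add_card (inter_subset_right : q ∩ T ⊆ T)
    (inter_subset_right : r ∩ T ⊆ T) (by rw [hT]; linarith [hq.2, hr.2])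
  simp only [mem_inter] at hv
  exact ⟨v, hv.1.1, hv.2.1⟩

/-- A minimal subfamily of `Q` without a common vertex has *private vertices*: `a i` lies in
every member `q j` except `q i`. -/
theorem exists_private_family {Q : Set (Finset V)} (hQ : Q.Finite)
    (hcover : ∀ v, ∃ q ∈ Q, v ∉ q) :
    ∃ (n : ℕ) (q : Fin n → Finset V) (a : Fin n → V),
      (∀ i, q i ∈ Q) ∧ (∀ i j, a i ∈ q j ↔ i ≠ j) ∧ ∀ v, ∃ i, v ∉ q i := by
  classical
  obtain ⟨R, hR, hmin⟩ := exists_min_image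
    ((hQ.toFinset.powerset).filter fun R => ∀ v, ∃ q ∈ R, v ∉ q) card
    ⟨hQ.toFinset, by simpa using hcover⟩
  simp only [mem_filter, mem_powerset] at hR hmin
  have hpriv : ∀ q ∈ R, ∃ v, v ∉ q ∧ ∀ r ∈ R, r ≠ q → v ∈ r := by
    intro q hq
    by_contra! h
    have hcov : ∀ v, ∃ r ∈ R.erase q, v ∉ r := by
      intro v
      obtain ⟨r, hr, hvr⟩ := hR.2 v
      by_cases hrq : r = q
      · obtain ⟨r', hr', hr'q, hvr'⟩ := h v (hrq ▸ hvr)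
        exact ⟨r', mem_erase.2 ⟨hr'q, hr'⟩, hvr'⟩
      · exact ⟨r, mem_erase.2 ⟨hrq, hr⟩, hvr⟩
    exact (card_erase_lt_of_mem hq).not_ge (hmin _ ⟨(erase_subset q R).trans hR.1, hcov⟩)
  choose a ha using hpriv
  let e := R.equivFin.symm
  refine ⟨R.card, fun i => e i, fun i => a _ (e i).2, fun i => hQ.mem_toFinset.1 (hR.1 (e i).2),
    fun i j => ⟨?_, fun hij =>
      (ha _ _).2 _ (e j).2 fun h => hij (e.injective (Subtype.ext h)).symm⟩,
    fun v => ?_⟩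
  · rintro h rfl
    exact (ha _ _).1 h
  · obtain ⟨r, hr, hvr⟩ := hR.2 v
    exact ⟨e.symm ⟨r, hr⟩, by simpa [e] using hvr⟩

section PrivateFamily

variable {G : SimpleGraph V} {ι : Type*} {q : ι → Finset V} {a : ι → V}

theorem injective_of_private (ha : ∀ i j, a i ∈ q j ↔ i ≠ j) : Function.Injective a := by
  intro i j hij
  by_contra hne
  exact (ha j j).1 (hij ▸ (ha i j).2 hne) rfl

theorem adj_of_private (hq : ∀ i, MaxClique G (q i)) (ha : ∀ i j, a i ∈ q j ↔ i ≠ j)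
    {i j k : ι} (hij : i ≠ j) (hki : k ≠ i) (hkj : k ≠ j) : G.Adj (a i) (a j) :=
  (hq k).adj ((ha i k).2 hki.symm) ((ha j k).2 hkj.symm) ((injective_of_private ha).ne hij)

theorem card_le_three_of_private [Fintype V] [DecidableEq V] [DecidableRel G.Adj] [Fintype ι]
    (hdeg : ∀ v, G.degree v ≤ 4) (hq : ∀ i, MaxClique G (q i))
    (ha : ∀ i j, a i ∈ q j ↔ i ≠ j) : Fintype.card ι ≤ 3 := by
  classical
  by_contra! hcard
  have hadj : ∀ {l m}, l ≠ m → G.Adj (a l) (a m) := fun {l m} hlm => by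
    obtain ⟨n, -, hn⟩ :=
      exists_mem_notMem_of_card_lt_card (s := {l, m}) (t := (univ : Finset ι))
      (card_le_two.trans_lt (by rw [card_univ]; omega))
    simp only [mem_insert, mem_singleton, not_or] at hn
    exact adj_of_private hq ha hlm hn.1 hn.2
  choose b hbq hab using fun l => (hq l).exists_not_adj fun h => (ha l l).1 h rfl
  have hba : ∀ l m, b l ≠ a m := by
    intro l m h
    by_cases hml : m = l
    · exact (ha m l).1 (h ▸ hbq l) hml
    · exact hab l (h ▸ hadj (Ne.symm hml))
  obtain ⟨i, j, k, hij, hik, hjk⟩ := (Fintype.two_lt_card_iff (α := ι)).1 (by omega)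
  have hbadj : ∀ {l m}, l ≠ m → G.Adj (a m) (b l) := fun {l m} hlm =>
    (hq l).adj ((ha m l).2 (Ne.symm hlm)) (hbq l) (hba l m).symm
  have hbij : b i ≠ b j := fun h => hab j (h ▸ hbadj hij)
  let s := insert (b i) (insert (b j) ((univ.erase k).image a))
  have hs : ∀ w ∈ s, G.Adj (a k) w := by
    simp only [s, forall_mem_insert, forall_mem_image, mem_erase, mem_univ, and_true]
    exact ⟨hbadj hik, hbadj hjk, fun l hlk => hadj (Ne.symm hlk)⟩
  have hscard : s.card = Fintype.card ι + 1 := by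
    rw [card_insert_of_notMem (by simp [hbij, fun l => (hba i l).symm]),
      card_insert_of_notMem (by simp [fun l => (hba j l).symm]),
      card_image_of_injective _ (injective_of_private ha), card_erase_of_mem (mem_univ k),
      card_univ]
    omega
  have := (card_le_degree_of_forall_adj hs).trans (hdeg (a k))
  omega

end PrivateFamily

theorem exists_private_triple [Fintype V] [DecidableEq V] [Nonempty V] {G : SimpleGraph V}
    [DecidableRel G.Adj] (hdeg : ∀ v, G.degree v ≤ 4) {Q : Set (Finset V)}
    (hQmc : ∀ q ∈ Q, MaxClique G q) (hQ : PairwiseIntersecting Q)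
    (hcover : ∀ v, ∃ q ∈ Q, v ∉ q) :
    ∃ (q : Fin 3 → Finset V) (a : Fin 3 → V),
      (∀ i, q i ∈ Q) ∧ (∀ i j, a i ∈ q j ↔ i ≠ j) ∧ ∀ v, ∃ i, v ∉ q i := by
  obtain ⟨n, q, a, hqQ, ha, hcov⟩ := exists_private_family Q.toFinite hcover
  have hle : n ≤ 3 := by
    simpa using card_le_three_of_private hdeg (fun i => hQmc _ (hqQ i)) ha
  have hge : 3 ≤ n := by
    by_contra! hn
    obtain ⟨i, -⟩ := hcov (Classical.arbitrary V)
    have hn₀ := i.pos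
    obtain ⟨v, hv₀, hv₁⟩ := hQ _ (hqQ ⟨0, hn₀⟩) _ (hqQ ⟨n - 1, by omega⟩)
    obtain ⟨j, hj⟩ := hcov v
    rcases (by have := j.isLt; omega : j.val = 0 ∨ j.val = n - 1) with h | h
    · exact hj (by rwa [show j = ⟨0, i.pos⟩ from Fin.ext h])
    · exact hj (by rwa [show j = ⟨n - 1, by omega⟩ from Fin.ext h])
  obtain rfl : n = 3 := le_antisymm hle hge
  exact ⟨q, a, hqQ, ha, hcov⟩

theorem SimpleGraph.Preconnected.mem_of_forall_adj_mem {G : SimpleGraph V} (hG : G.Preconnected)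
    {S : Set V} (hS : ∀ v ∈ S, ∀ w, G.Adj v w → w ∈ S) {u : V} (hu : u ∈ S) (v : V) :
    v ∈ S := by
  obtain ⟨p⟩ := hG u v
  induction p with
  | nil => exact hu
  | cons h _ ih => exact ih (hS _ hu _ h)

theorem nonempty_iso_of_injective_hom {W : Type*} [Fintype W] [Nonempty W] {H : SimpleGraph W}
    [DecidableRel H.Adj] {G : SimpleGraph V} [Fintype V] [DecidableEq V] [DecidableRel G.Adj]
    {d : ℕ} (f : H →g G) (hf : Function.Injective f) (hH : ∀ w, d ≤ H.degree w)
    (hG : ∀ v, G.degree v ≤ d) (hconn : G.Connected) : Nonempty (H ≃g G) := by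
  have hnbr : ∀ w v, G.Adj (f w) v → ∃ w', H.Adj w w' ∧ f w' = v := by
    intro w v hv
    simpa using mem_of_adj_of_degree_le_card (s := (H.neighborFinset w).image f)
      (by simpa using fun w' hw' => f.map_rel hw')
      (by rw [card_image_of_injective _ hf, SimpleGraph.card_neighborFinset_eq_degree]
          exact (hG _).trans (hH w)) hv
  have hsurj : Function.Surjective f := fun v =>
    hconn.preconnected.mem_of_forall_adj_mem (S := Set.range f)
      (by
        rintro _ ⟨w, rfl⟩ v hv
        obtain ⟨w', -, rfl⟩ := hnbr w v hv
        exact ⟨w', rfl⟩)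
      ⟨Classical.arbitrary W, rfl⟩ v
  refine ⟨⟨Equiv.ofBijective f ⟨hf, hsurj⟩, fun {w w'} => ⟨fun h => ?_, f.map_rel⟩⟩⟩
  obtain ⟨w'', hw'', hfw⟩ := hnbr w _ h
  rwa [← hf hfw]

instance : DecidableRel octahedron.Adj := fun p r => inferInstanceAs (Decidable (p.1 ≠ r.1))

theorem octahedron_degree (p : Fin 3 × Fin 2) : octahedron.degree p = 4 := by
  revert p
  decide

theorem nonempty_iso_octahedron [Fintype V] [DecidableEq V] {G : SimpleGraph V}
    [DecidableRel G.Adj] (hdeg : ∀ v, G.degree v ≤ 4) (hconn : G.Connected) {a x : Fin 3 → V}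
    (haa : ∀ i j, i ≠ j → G.Adj (a i) (a j)) (hax : ∀ i j, i ≠ j → G.Adj (a i) (x j))
    (hxx : ∀ i j, i ≠ j → G.Adj (x i) (x j)) (hne : ∀ i, a i ≠ x i) :
    Nonempty (G ≃g octahedron) := by
  let f : octahedron →g G :=
    ⟨fun p => ![a p.1, x p.1] p.2, fun {p r} h => by
      obtain ⟨i, s⟩ := p
      obtain ⟨j, t⟩ := r
      fin_cases s <;> fin_cases t
      exacts [haa i j h, hax i j h, (hax j i (Ne.symm h)).symm, hxx i j h]⟩
  have hf : Function.Injective f := by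
    rintro ⟨i, s⟩ ⟨j, t⟩ h
    by_cases hij : i = j
    · subst hij
      fin_cases s <;> fin_cases t
      exacts [rfl, absurd h (hne i), absurd h.symm (hne i), rfl]
    · exact absurd h (f.map_rel (show octahedron.Adj (i, s) (j, t) from hij)).ne
  obtain ⟨e⟩ :=
    nonempty_iso_of_injective_hom f hf (fun p => (octahedron_degree p).ge) hdeg hconn
  exact ⟨e.symm⟩

section PrivateTriple

variable {G : SimpleGraph V} {q : Fin 3 → Finset V} {a : Fin 3 → V}

theorem adj_of_private_three (hq : ∀ i, MaxClique G (q i)) (ha : ∀ i j, a i ∈ q j ↔ i ≠ j)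
    {i j : Fin 3} (hij : i ≠ j) : G.Adj (a i) (a j) := by
  obtain ⟨k, hki, hkj⟩ : ∃ k : Fin 3, k ≠ i ∧ k ≠ j := by
    revert i j
    decide
  exact adj_of_private hq ha hij hki hkj

theorem isClique_image_private [DecidableEq V] (hq : ∀ i, MaxClique G (q i))
    (ha : ∀ i j, a i ∈ q j ↔ i ≠ j) : G.IsClique (univ.image a : Set V) := by
  rw [coe_image, coe_univ, Set.image_univ]
  rintro _ ⟨i, rfl⟩ _ ⟨j, rfl⟩ hne
  exact adj_of_private_three hq ha fun h => hne (h ▸ rfl)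

theorem card_image_private [DecidableEq V] (ha : ∀ i j, a i ∈ q j ↔ i ≠ j) :
    (univ.image a).card = 3 := by
  rw [card_image_of_injective _ (injective_of_private ha), card_univ, Fintype.card_fin]

variable [Fintype V] [DecidableEq V] [DecidableRel G.Adj] (hdeg : ∀ v, G.degree v ≤ 4)
  (hq : ∀ i, MaxClique G (q i)) (ha : ∀ i j, a i ∈ q j ↔ i ≠ j)
include hdeg hq ha

theorem exists_ne_private_mem {p : Finset V} (hp : MaxClique G p) {i : Fin 3} (hi : a i ∈ p)
    {x : V} (hxp : x ∈ p) (hxq : x ∈ q i) : ∃ j, j ≠ i ∧ a j ∈ p := by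
  by_contra! hp'
  obtain ⟨j, hji⟩ := exists_ne i
  have hxa : ∀ l, G.Adj x (a l) := by
    intro l
    by_cases hli : l = i
    · subst hli
      exact hp.adj hxp hi fun h => (ha l l).1 (h ▸ hxq) rfl
    · exact (hq i).adj hxq ((ha l i).2 hli) fun h => hp' l hli (h ▸ hxp)
  obtain ⟨u, hup, hau⟩ := hp.exists_not_adj (hp' j hji)
  obtain ⟨w, hwq, haw⟩ := (hq i).exists_not_adj fun h => (ha i i).1 h rfl
  have huT : ∀ l, a l ≠ u := by
    intro l hl
    by_cases hli : l = i
    · subst hli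
      exact hau (hl ▸ adj_of_private_three hq ha hji)
    · exact hp' l hli (hl ▸ hup)
  have hwT : ∀ l, a l ≠ w := by
    intro l hl
    by_cases hli : l = i
    · exact (ha l i).1 (hl ▸ hwq) hli
    · exact haw (hl ▸ adj_of_private_three hq ha (Ne.symm hli))
  -- `x` sees all of `T`, plus `u ∈ p` and `w ∈ q i` outside `T`
  have huw := eq_of_adj_of_forall_adj (hdeg x) (card_image_private ha) (by simpa using hxa)
    (hp.adj hxp hup fun h => hau (h ▸ (hxa j).symm))
    ((hq i).adj hxq hwq fun h => haw (h ▸ (hxa i).symm)) (by simpa using huT)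
    (by simpa using hwT)
  exact hau (huw ▸ (hq i).adj ((ha j i).2 hji) hwq (hwT j))

theorem mem_of_private_disjoint {p : Finset V} (hp : MaxClique G p) (hpa : ∀ l, a l ∉ p)
    {y : V} (hyp : y ∈ p) {i j : Fin 3} (hij : i ≠ j) (hyi : y ∈ q i) (hyj : y ∈ q j)
    {z : V} (hzp : z ∈ p) {k : Fin 3} (hzk : z ∈ q k) : y ∈ q k := by
  by_contra hyk
  have hki : k ≠ i := by
    rintro rfl
    exact hyk hyi
  have hya : ∀ l, G.Adj y (a l) := by
    intro l
    by_cases hli : l = i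
    · subst hli
      exact (hq j).adj hyj ((ha l j).2 hij) fun h => hpa l (h ▸ hyp)
    · exact (hq i).adj hyi ((ha l i).2 hli) fun h => hpa l (h ▸ hyp)
  obtain ⟨t, htp, hat⟩ := hp.exists_not_adj (hpa i)
  have hza : G.Adj (a i) z := (hq k).adj ((ha i k).2 hki.symm) hzk fun h => hpa i (h ▸ hzp)
  -- `y` sees all of `T`, plus `z` and `t` in `p`
  have hzt := eq_of_adj_of_forall_adj (hdeg y) (card_image_private ha) (by simpa using hya)
    (hp.adj hyp hzp fun h => hyk (h ▸ hzk)) (hp.adj hyp htp fun h => hat (h ▸ (hya i).symm))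
    (by simpa using fun l (h : a l = z) => hpa l (h ▸ hzp))
    (by simpa using fun l (h : a l = t) => hpa l (h ▸ htp))
  exact hat (hzt ▸ hza)

theorem two_le_card_inter_private (hconn : G.Connected) (hoct : ¬ Nonempty (G ≃g octahedron))
    (hcover : ∀ v, ∃ i, v ∉ q i) {p : Finset V} (hp : MaxClique G p)
    (hpq : ∀ i, ∃ v, v ∈ p ∧ v ∈ q i) : 2 ≤ (p ∩ univ.image a).card := by
  by_contra! hlt
  have hunique : ∀ i j, a i ∈ p → a j ∈ p → i = j := by
    intro i j hi hj
    by_contra hij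
    have hsub : ({a i, a j} : Finset V) ⊆ p ∩ univ.image a := by
      simp [insert_subset_iff, hi, hj]
    have := card_le_card hsub
    rw [card_pair ((injective_of_private ha).ne hij)] at this
    omega
  choose x hxp hxq using hpq
  by_cases hi : ∃ i, a i ∈ p
  · obtain ⟨i, hi⟩ := hi
    obtain ⟨j, hji, hj⟩ := exists_ne_private_mem hdeg hq ha hp hi (hxp i) (hxq i)
    exact hji (hunique j i hj hi)
  push Not at hi
  by_cases hx : Function.Injective x
  · exact hoct (nonempty_iso_octahedron hdeg hconn (fun i j => adj_of_private_three hq ha)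
      (fun i j hij => (hq j).adj ((ha i j).2 hij) (hxq j) fun h => hi i (h ▸ hxp j))
      (fun i j hij => hp.adj (hxp i) (hxp j) (hx.ne hij)) fun i h => hi i (h ▸ hxp i))
  · simp only [Function.Injective, not_forall] at hx
    obtain ⟨i, j, hxij, hij⟩ := hx
    obtain ⟨k, hk⟩ := hcover (x i)
    exact hk (mem_of_private_disjoint hdeg hq ha hp hi (hxp i) hij (hxq i) (hxij ▸ hxq j)
      (hxp k) (hxq k))

end PrivateTriple

section CoveredTriangle

variable {G : SimpleGraph V} [DecidableEq V] {Q : Set (Finset V)} {T : Finset V}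
  (hQmc : ∀ p ∈ Q, MaxClique G p) (hQT : ∀ p ∈ Q, 2 ≤ (p ∩ T).card)
  (hcover : ∀ v, ∃ p ∈ Q, v ∉ p) (hT3 : T.card = 3) (hTc : G.IsClique (T : Set V))
include hQmc hQT hcover hT3 hTc

theorem exists_not_adj_of_covered [Fintype V] [DecidableRel G.Adj]
    (hdeg : ∀ v, G.degree v ≤ 4) {d : V} (hdT : d ∉ T) : ∃ t ∈ T, ¬ G.Adj d t := by
  by_contra! hd
  obtain ⟨p, hpQ, hdp⟩ := hcover d
  obtain ⟨b, hb, e, he, hbe⟩ := one_lt_card.1 (hQT p hpQ)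
  rw [mem_inter] at hb he
  obtain ⟨v, hvp, hdv⟩ := (hQmc p hpQ).exists_not_adj hdp
  have hvT : v ∉ T := fun h => hdv (hd v h)
  have hvd : v ≠ d := ne_of_mem_of_not_mem hvp hdp
  -- `T \ {b}`, `d` and `v` are four neighbours of `b`, hence all of them
  have hnb : ∀ u, G.Adj b u → u ∈ insert d (insert v (T.erase b)) := fun u hu =>
    mem_of_adj_of_degree_le_card
      (by
        simp only [forall_mem_insert, mem_erase]
        exact ⟨(hd b hb.2).symm, (hQmc p hpQ).adj hb.1 hvp (ne_of_mem_of_not_mem hb.2 hvT),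
          fun t ht => hTc hb.2 ht.2 (Ne.symm ht.1)⟩)
      (by
        rw [card_insert_of_notMem (by simp [hvd.symm, hdT]),
          card_insert_of_notMem (by simp [hvT]), card_erase_of_mem hb.2, hT3]
        exact hdeg b) hu
  obtain ⟨r, hrQ, her⟩ := hcover e
  have hbr : b ∈ r := mem_of_two_le_card_inter hT3 (hQT r hrQ) he.2 her hb.2 hbe
  refine her ((hQmc r hrQ).mem_of_forall_adj fun u hu hue => ?_)
  by_cases hub : u = b
  · exact hub ▸ hTc he.2 hb.2 (Ne.symm hbe)
  rcases mem_insert.1 (hnb u ((hQmc r hrQ).adj hbr hu (Ne.symm hub))) with rfl | h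
  · exact (hd e he.2).symm
  rcases mem_insert.1 h with rfl | h
  · exact (hQmc p hpQ).adj he.1 hvp (ne_of_mem_of_not_mem he.2 hvT)
  · exact hTc he.2 (mem_of_mem_erase h) (Ne.symm hue)

theorem exists_triangle_inter_eq_pair_of_covered {x y : V} (hx : x ∈ T) (hy : y ∈ T)
    (hxy : x ≠ y) : ∃ T' : Finset V, IsTriangle G T' ∧ T' ≠ T ∧ T ∩ T' = {x, y} := by
  obtain ⟨z, hz, hzxy⟩ := exists_mem_notMem_of_card_lt_card (s := {x, y}) (t := T)
    (card_le_two.trans_lt (by omega))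
  simp only [mem_insert, mem_singleton, not_or] at hzxy
  have hTeq : T = {x, y, z} := (eq_of_subset_of_card_le (by simp [insert_subset_iff, *])
    (by rw [hT3, card_eq_three.2 ⟨x, y, z, hxy, Ne.symm hzxy.1, Ne.symm hzxy.2, rfl⟩])).symm
  obtain ⟨p, hpQ, hzp⟩ := hcover z
  have hxp := mem_of_two_le_card_inter hT3 (hQT p hpQ) hz hzp hx (Ne.symm hzxy.1)
  have hyp := mem_of_two_le_card_inter hT3 (hQT p hpQ) hz hzp hy (Ne.symm hzxy.2)
  -- otherwise `z`, adjacent to `x` and `y`, would extend `p`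
  obtain ⟨w, hwp, hwx, hwy⟩ : ∃ w ∈ p, w ≠ x ∧ w ≠ y := by
    by_contra! h
    refine hzp ((hQmc p hpQ).mem_of_forall_adj fun u hu _ => ?_)
    by_cases hux : u = x
    · exact hux ▸ hTc hz hx hzxy.1
    · exact h u hu hux ▸ hTc hz hy hzxy.2
  have hwT : w ∉ T := by
    simp [hTeq, hwx, hwy, ne_of_mem_of_not_mem hwp hzp]
  refine ⟨{x, y, w}, ⟨(hQmc p hpQ).1.subset (by simp [Set.insert_subset_iff, *]),
    card_eq_three.2 ⟨x, y, w, hxy, Ne.symm hwx, Ne.symm hwy, rfl⟩⟩,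
    fun h => hwT (h ▸ by simp), ?_⟩
  ext u
  simp only [mem_inter, mem_insert, mem_singleton]
  constructor
  · rintro ⟨hu, h | h | rfl⟩
    exacts [Or.inl h, Or.inr h, absurd hu hwT]
  · rintro (rfl | rfl)
    exacts [⟨hx, Or.inl rfl⟩, ⟨hy, Or.inr (Or.inl rfl)⟩]

end CoveredTriangle

theorem stmt7 {V : Type u} [Fintype V] [DecidableEq V] (G : SimpleGraph V)
    [DecidableRel G.Adj] (hconn : G.Connected) (hdeg : ∀ v, G.degree v ≤ 4)
    (hoct : ¬ Nonempty (G ≃g octahedron))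
    (Q : Set (Finset V)) (hQ : IsNecktie G Q) :
    ∃ T : Finset V, IsInnerTriangle G T ∧ Q = QT G T := by
  obtain ⟨⟨hQmc, hQpi, hQmax⟩, hcover⟩ := hQ
  push Not at hcover
  have : Nonempty V := hconn.nonempty
  obtain ⟨q, a, hqQ, ha, hcov⟩ := exists_private_triple hdeg hQmc hQpi hcover
  have hq : ∀ i, MaxClique G (q i) := fun i => hQmc _ (hqQ i)
  have hT3 := card_image_private ha
  have hTc := isClique_image_private hq ha
  have hQT : ∀ p ∈ Q, 2 ≤ (p ∩ univ.image a).card := fun p hp =>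
    two_le_card_inter_private hdeg hq ha hconn hoct hcov (hQmc p hp) fun i => hQpi p hp _ (hqQ i)
  have hTmax : MaxClique G (univ.image a) := maxClique_of_forall_exists_not_adj hTc
    fun d hd => exists_not_adj_of_covered hQmc hQT hcover hT3 hTc hdeg hd
  refine ⟨univ.image a, ⟨hTmax, hT3, fun x hx y hy hxy =>
    exists_triangle_inter_eq_pair_of_covered hQmc hQT hcover hT3 hTc hx hy hxy⟩, ?_⟩
  exact (hQmax (QT G (univ.image a)) (fun p hp => ⟨hQmc p hp, hQT p hp⟩) (fun p hp => hp.1)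
    (pairwiseIntersecting_QT G hT3)).symm
end

section
/- If G is a clique-Helly graph, then G is clique-convergent: there exist m < n such that K^m(G) is isomorphic to K^n(G). -/
/-!
In a clique-Helly graph every clique of `K(G)` is the star of a vertex: the Helly property gives
a vertex common to its members, and maximality then forces the whole star in. Consequently
`K(G)` is again clique-Helly, and sending a clique of `K(G)` to the centre of its star embeds
`K²(G)` into `G` as an induced subgraph. The orders of `K^{2n}(G)` therefore do not increase, and
where they stop decreasing the embedding `K^{2n+2}(G) ↪ K^{2n}(G)` is an isomorphism. A graph
with no vertices is handled apart: `K(G)` and `K²(G)` are then both the one-vertex graph.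
-/

universe u

variable {V : Type u}

section CliqueGraph

variable {W : Type*} {H : SimpleGraph W}

lemma maxClique_iff_maximal {q : Finset W} :
    MaxClique H q ↔ Maximal (fun t : Finset W => H.IsClique (t : Set W)) q :=
  ⟨fun hq => ⟨hq.1, fun _ ht hqt => (hq.2 _ ht hqt).ge⟩,
    fun hq => ⟨hq.1, fun _ ht hqt => le_antisymm hqt (hq.2 ht hqt)⟩⟩

lemma MaxClique.adj_s17 {q : Finset W} (hq : MaxClique H q) {x y : W} (hx : x ∈ q) (hy : y ∈ q)
    (hxy : x ≠ y) : H.Adj x y :=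
  hq.1 hx hy hxy

lemma MaxClique.nonempty [Nonempty W] {q : Finset W} (hq : MaxClique H q) : q.Nonempty := by
  obtain ⟨v⟩ := ‹Nonempty W›
  rw [Finset.nonempty_iff_ne_empty]
  rintro rfl
  exact Finset.singleton_ne_empty v (hq.2 {v} (by simp) (Finset.empty_subset _)).symm

lemma MaxClique.mem_of_isClique_insert {q : Finset W} (hq : MaxClique H q) {v : W}
    (hv : H.IsClique (insert v (q : Set W))) : v ∈ q := by
  classical
  rw [hq.2 (insert v q) (by rwa [Finset.coe_insert]) (Finset.subset_insert v q)]
  exact Finset.mem_insert_self v q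

instance [Subsingleton W] : Subsingleton {q // MaxClique H q} := by
  refine ⟨fun ⟨q, hq⟩ ⟨r, hr⟩ => Subtype.ext ?_⟩
  classical
  have hqr : H.IsClique ((q ∪ r : Finset W) : Set W) :=
    SimpleGraph.IsClique.of_subsingleton Set.subsingleton_of_subsingleton
  exact (hq.2 _ hqr Finset.subset_union_left).trans
    (hr.2 _ hqr Finset.subset_union_right).symm

variable [Finite W]

lemma exists_maxClique_superset {s : Finset W} (hs : H.IsClique (s : Set W)) :
    ∃ q, MaxClique H q ∧ s ⊆ q := by
  obtain ⟨q, hsq, hq⟩ :=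
    Finite.exists_le_maximal (p := fun t : Finset W => H.IsClique (t : Set W)) hs
  exact ⟨q, maxClique_iff_maximal.2 hq, hsq⟩

instance : Nonempty {q // MaxClique H q} :=
  let ⟨q, hq, _⟩ := exists_maxClique_superset (H := H) (s := ∅) (by simp)
  ⟨⟨q, hq⟩⟩

lemma CliqueHelly.exists_star_eq [Nonempty W] (h : CliqueHelly H)
    {S : Finset {q // MaxClique H q}} (hS : MaxClique (cliqueGraph H) S) :
    ∃ v, ∀ q : {q // MaxClique H q}, q ∈ S ↔ v ∈ q.1 := by
  have hpair : PairwiseIntersecting (Subtype.val '' (S : Set {q // MaxClique H q})) := by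
    rintro _ ⟨q, hq, rfl⟩ _ ⟨r, hr, rfl⟩
    by_cases hqr : q = r
    · obtain ⟨w, hw⟩ := q.2.nonempty
      exact ⟨w, hw, hqr ▸ hw⟩
    · exact (hS.1 hq hr hqr).2
  obtain ⟨v, hv⟩ := h _ ((Finset.coe_nonempty.2 hS.nonempty).image _)
    (by rintro _ ⟨q, -, rfl⟩; exact q.2) hpair
  refine ⟨v, fun q => ⟨fun hq => hv q.1 ⟨q, hq, rfl⟩, fun hvq => hS.mem_of_isClique_insert ?_⟩⟩
  exact SimpleGraph.isClique_insert.2 ⟨hS.1, fun r hr hqr => ⟨hqr, v, hvq, hv r.1 ⟨r, hr, rfl⟩⟩⟩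

lemma cliqueHelly_cliqueGraph [Nonempty W] (h : CliqueHelly H) : CliqueHelly (cliqueGraph H) := by
  intro 𝔉 _ h𝔉 hpair
  choose c hc using fun S (hS : S ∈ 𝔉) => h.exists_star_eq (h𝔉 S hS)
  let X : Set W := {v | ∃ S, ∃ hS : S ∈ 𝔉, c S hS = v}
  have hX : H.IsClique (X.toFinite.toFinset : Set W) := by
    rw [Set.Finite.coe_toFinset]
    rintro _ ⟨S, hS, rfl⟩ _ ⟨T, hT, rfl⟩ hST
    obtain ⟨q, hqS, hqT⟩ := hpair S hS T hT
    exact q.2.adj_s17 ((hc S hS q).1 hqS) ((hc T hT q).1 hqT) hST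
  obtain ⟨q, hq, hXq⟩ := exists_maxClique_superset hX
  exact ⟨⟨q, hq⟩, fun S hS => (hc S hS _).2 (hXq (X.toFinite.mem_toFinset.2 ⟨S, hS, rfl⟩))⟩

lemma CliqueHelly.nonempty_embedding [Nonempty W] (h : CliqueHelly H) :
    Nonempty (cliqueGraph (cliqueGraph H) ↪g H) := by
  choose c hc using fun A : {S // MaxClique (cliqueGraph H) S} => h.exists_star_eq A.2
  have hinj : Function.Injective c := fun A B hAB =>
    Subtype.ext (Finset.ext fun q => by rw [hc A, hc B, hAB])
  refine ⟨⟨⟨c, hinj⟩, fun {A B} => ⟨fun hAB => ?_, fun ⟨hne, q, hqA, hqB⟩ => ?_⟩⟩⟩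
  · classical
    have hAB' : H.IsClique (({c A, c B} : Finset W) : Set W) := by
      rw [Finset.coe_pair]
      exact SimpleGraph.isClique_pair.2 fun _ => hAB
    obtain ⟨q, hq, hABq⟩ := exists_maxClique_superset hAB'
    have hA : c A ∈ q := hABq (by simp)
    have hB : c B ∈ q := hABq (by simp)
    exact ⟨fun e => hAB.ne (congrArg c e), ⟨q, hq⟩, (hc A _).2 hA, (hc B _).2 hB⟩
  · exact q.2.adj_s17 ((hc A q).1 hqA) ((hc B q).1 hqB) (hinj.ne hne)

lemma nonempty_iso_cliqueGraph_cliqueGraph_of_isEmpty [IsEmpty W] (H : SimpleGraph W) :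
    Nonempty (cliqueGraph H ≃g cliqueGraph (cliqueGraph H)) := by
  obtain ⟨q⟩ : Nonempty {q // MaxClique H q} := inferInstance
  obtain ⟨S⟩ : Nonempty {S // MaxClique (cliqueGraph H) S} := inferInstance
  refine ⟨⟨equivOfSubsingletonOfSubsingleton (fun _ => S) (fun _ => q), fun {a b} => ?_⟩⟩
  rw [Subsingleton.elim a b]
  simp

end CliqueGraph

attribute [instance] FGraph.fin

lemma nonempty_iterK {F : FGraph} [Nonempty F.V] : ∀ n, Nonempty (iterK F n).V
  | 0 => ‹_›
  | n + 1 => inferInstanceAs (Nonempty {q // MaxClique (iterK F n).G q})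

lemma cliqueHelly_iterK {F : FGraph} [Nonempty F.V] (h : CliqueHelly F.G) :
    ∀ n, CliqueHelly (iterK F n).G
  | 0 => h
  | n + 1 =>
    have := nonempty_iterK (F := F) n
    cliqueHelly_cliqueGraph (cliqueHelly_iterK h n)

lemma exists_iso_succ_of_embedding (Γ : ℕ → FGraph)
    (e : ∀ n, Nonempty ((Γ (n + 1)).G ↪g (Γ n).G)) :
    ∃ n, Nonempty ((Γ n).G ≃g (Γ (n + 1)).G) := by
  let n := Function.argmin fun n => Nat.card (Γ n).V
  obtain ⟨f⟩ := e n
  have hcard : Nat.card (Γ n).V ≤ Nat.card (Γ (n + 1)).V :=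
    Function.argmin_le (fun n => Nat.card (Γ n).V) (n + 1)
  exact ⟨n, ⟨(RelIso.ofSurjective f (f.injective.bijective_of_nat_card_le hcard).2).symm⟩⟩

theorem stmt17 {V : Type u} [Fintype V] (G : SimpleGraph V)
    (h : CliqueHelly G) :
    ∃ m n : ℕ, m < n ∧
      Nonempty ((iterK ⟨V, inferInstance, G⟩ m).G ≃g (iterK ⟨V, inferInstance, G⟩ n).G) := by
  rcases isEmpty_or_nonempty V with _ | _
  · exact ⟨1, 2, one_lt_two, nonempty_iso_cliqueGraph_cliqueGraph_of_isEmpty G⟩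
  · have hK2 (n : ℕ) := have := nonempty_iterK (F := ⟨V, inferInstance, G⟩) (2 * n)
      (cliqueHelly_iterK (F := ⟨V, inferInstance, G⟩) h (2 * n)).nonempty_embedding
    obtain ⟨n, hn⟩ :=
      exists_iso_succ_of_embedding (fun n => iterK ⟨V, inferInstance, G⟩ (2 * n)) hK2
    exact ⟨2 * n, 2 * n + 2, by omega, hn⟩
end
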